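/- arXiv:2405.16679 — 3 statements merged into one kernel-verified Lean document; each statement's English description precedes it below -/
import Mathlib

section
/- Let d ≥ 1 be an integer, let k > 0, let m satisfy d/(d+k) < m < 1, and set α = 2 − km/(d(1−m)). Then there exists a constant C > 0 such that for every nonnegative measurable function f ∈ L¹(ℝ^d), not almost everywhere zero, with ∫_{ℝ^d} f(x)^m dx < ∞, the reversed Hardy–Littlewood–Sobolev inequality holds: ∬_{ℝ^d×ℝ^d} f(x)|x−y|^k f(y) dx dy ≥ C (∫_{ℝ^d} f(x) dx)^α (∫_{ℝ^d} f(x)^m dx)^{(2−α)/m}. -/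
/-!
Fix `x` and a scale `ρ > 0`, and put `φ y = 1 + (‖y - x‖ / ρ) ^ k`. Hölder's inequality with
exponents `1 / m` and `1 / (1 - m)`, applied to `f ^ m = (f φ) ^ m φ ^ (-m)`, gives
`∫ f ^ m ≤ (∫ f + ρ ^ (-k) ∫ ‖x - y‖ ^ k f y dy) ^ m (ρ ^ d K) ^ (1 - m)` with
`K = ∫ (1 + ‖z‖ ^ k) ^ (-m / (1 - m))`, which is finite precisely because `m > d / (d + k)`.
Choosing `ρ` with `(2 ∫ f) ^ m (ρ ^ d K) ^ (1 - m) = ∫ f ^ m` forces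
`∫ ‖x - y‖ ^ k f y dy ≥ ρ ^ k ∫ f` for every `x`; integrating against `f x dx` gives
`∬ ≥ ρ ^ k (∫ f) ^ 2`, which is the claimed bound once `ρ` is written out.
-/

open MeasureTheory Real Module
open scoped ENNReal

theorem one_add_rpow_le_two_rpow_mul {k s : ℝ} (hk : 0 ≤ k) (hs : 0 ≤ s) :
    (1 + s) ^ k ≤ 2 ^ k * (1 + s ^ k) := calc
  (1 + s) ^ k ≤ (2 * max 1 s) ^ k := by gcongr; linarith [le_max_left 1 s, le_max_right 1 s]
  _ = 2 ^ k * max 1 (s ^ k) := by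
    rw [mul_rpow zero_le_two (by positivity), rpow_max zero_le_one hs hk, one_rpow]
  _ ≤ 2 ^ k * (1 + s ^ k) := by gcongr; exact max_le_add_of_nonneg zero_le_one (by positivity)

theorem integral_rpow_pos {α : Type*} [MeasurableSpace α] {μ : Measure α} {f : α → ℝ}
    (hf : 0 ≤ f) (hf_ne : ¬ f =ᵐ[μ] 0) {p : ℝ} (hp : 0 < p)
    (hfp : Integrable (fun x => f x ^ p) μ) : 0 < ∫ x, f x ^ p ∂μ := by
  have hsupp : Function.support (fun x => f x ^ p) = Function.support f := by
    ext x; simp [rpow_eq_zero (hf x) hp.ne']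
  rw [integral_pos_iff_support_of_nonneg (fun x => rpow_nonneg (hf x) p) hfp, hsupp,
    pos_iff_ne_zero]
  exact fun h => hf_ne (ae_iff.2 h)

theorem lintegral_rpow_le_of_weight {α : Type*} [MeasurableSpace α] {μ : Measure α} {m : ℝ}
    (hm0 : 0 < m) (hm1 : m < 1) {f w : α → ℝ≥0∞} (hf : AEMeasurable f μ)
    (hw : AEMeasurable w μ) (hw0 : ∀ x, w x ≠ 0) (hwtop : ∀ x, w x ≠ ⊤) :
    ∫⁻ x, f x ^ m ∂μ ≤
      (∫⁻ x, f x * w x ∂μ) ^ m * (∫⁻ x, w x ^ (-(m / (1 - m))) ∂μ) ^ (1 - m) := by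
  have hpq : (1 / m).HolderConjugate (1 / (1 - m)) := by
    rw [Real.holderConjugate_iff]
    refine ⟨by rw [lt_div_iff₀ hm0]; linarith, by simp only [one_div, inv_inv]; ring⟩
  have holder := ENNReal.lintegral_mul_le_Lp_mul_Lq μ hpq ((hf.mul hw).pow_const m)
    (hw.pow_const (-m))
  have hsplit : ∀ x, (f x * w x) ^ m * w x ^ (-m) = f x ^ m := fun x => by
    rw [ENNReal.mul_rpow_of_nonneg _ _ hm0.le, mul_assoc,
      ← ENNReal.rpow_add _ _ (hw0 x) (hwtop x), add_neg_cancel, ENNReal.rpow_zero, mul_one]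
  simp only [Pi.mul_apply, hsplit, one_div_one_div, ← ENNReal.rpow_mul] at holder
  convert holder using 5
  · rw [mul_one_div_cancel hm0.ne', ENNReal.rpow_one]
  · field_simp

theorem ENNReal.mul_le_of_two_mul_rpow_le {m : ℝ} (hm : 0 < m) {a b c r t : ℝ≥0∞}
    (ha : a ≠ ⊤) (hr0 : r ≠ 0) (hr : r ≠ ⊤) (hc0 : c ≠ 0) (hc : c ≠ ⊤)
    (hb : (2 * a) ^ m * c ≤ b) (h : b ≤ (a + r⁻¹ * t) ^ m * c) : a * r ≤ t := by
  have h2a : 2 * a ≤ a + r⁻¹ * t := by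
    rw [← ENNReal.rpow_le_rpow_iff hm, ← ENNReal.mul_le_mul_iff_left hc0 hc]
    exact hb.trans h
  rw [two_mul, ENNReal.add_le_add_iff_left ha] at h2a
  rwa [← ENNReal.div_eq_inv_mul, ENNReal.le_div_iff_mul_le (.inl hr0) (.inl hr)] at h2a

theorem norm_div_eq_norm_inv_smul {E : Type*} [NormedAddCommGroup E] [NormedSpace ℝ E] {ρ : ℝ}
    (hρ : 0 ≤ ρ) (v : E) : ‖v‖ / ρ = ‖ρ⁻¹ • v‖ := by
  rw [norm_smul, norm_inv, norm_of_nonneg hρ, inv_mul_eq_div]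

section HaarMeasure

variable {E : Type*} [NormedAddCommGroup E] [NormedSpace ℝ E] [FiniteDimensional ℝ E]
  [MeasurableSpace E] [BorelSpace E] {μ : Measure E} [μ.IsAddHaarMeasure] {k q m : ℝ}
  {f : E → ℝ}

theorem integrable_one_add_norm_rpow_rpow_neg (hk : 0 < k) (hkq : (finrank ℝ E : ℝ) < k * q) :
    Integrable (fun z : E => (1 + ‖z‖ ^ k) ^ (-q)) μ := by
  have hq : 0 < q := pos_of_mul_pos_right ((Nat.cast_nonneg _).trans_lt hkq) hk.le
  refine ((integrable_one_add_norm hkq).const_mul (2 ^ (k * q))).mono'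
    (Measurable.aestronglyMeasurable (by fun_prop)) (Filter.Eventually.of_forall fun z => ?_)
  rw [norm_of_nonneg (by positivity)]
  calc (1 + ‖z‖ ^ k) ^ (-q) ≤ (2 ^ (-k) * (1 + ‖z‖) ^ k) ^ (-q) := by
        refine rpow_le_rpow_of_nonpos (by positivity) ?_ (by linarith)
        rw [rpow_neg zero_le_two, inv_mul_le_iff₀ (by positivity)]
        exact one_add_rpow_le_two_rpow_mul hk.le (norm_nonneg z)
    _ = 2 ^ (k * q) * (1 + ‖z‖) ^ (-(k * q)) := by
        rw [mul_rpow (by positivity) (by positivity), ← rpow_mul zero_le_two,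
          ← rpow_mul (by positivity)]
        ring_nf

theorem integral_one_add_div_rpow_rpow_neg {ρ : ℝ} (hρ : 0 < ρ) (x : E) :
    ∫ y, (1 + (‖y - x‖ / ρ) ^ k) ^ (-q) ∂μ =
      ρ ^ finrank ℝ E * ∫ z, (1 + ‖z‖ ^ k) ^ (-q) ∂μ := by
  simp_rw [norm_div_eq_norm_inv_smul hρ.le]
  rw [integral_sub_right_eq_self (fun z => (1 + ‖ρ⁻¹ • z‖ ^ k) ^ (-q)) x,
    Measure.integral_comp_inv_smul_of_nonneg μ (fun z => (1 + ‖z‖ ^ k) ^ (-q)) hρ.le,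
    smul_eq_mul]

theorem integrable_one_add_div_rpow_rpow_neg
    (h : Integrable (fun z : E => (1 + ‖z‖ ^ k) ^ (-q)) μ) {ρ : ℝ} (hρ : 0 < ρ) (x : E) :
    Integrable (fun y => (1 + (‖y - x‖ / ρ) ^ k) ^ (-q)) μ := by
  simp_rw [norm_div_eq_norm_inv_smul hρ.le]
  exact (h.comp_smul (inv_ne_zero hρ.ne')).comp_sub_right x

theorem integral_one_add_norm_rpow_rpow_neg_pos (hk : 0 < k)
    (hkq : (finrank ℝ E : ℝ) < k * q) : 0 < ∫ z, (1 + ‖z‖ ^ k) ^ (-q) ∂μ :=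
  integral_pos_of_integrable_nonneg_nonzero (x := 0)
    ((continuous_const.add (continuous_norm.rpow_const fun _ => .inr hk.le)).rpow_const
      fun z => .inl (add_pos_of_pos_of_nonneg one_pos (rpow_nonneg (norm_nonneg z) k)).ne')
    (integrable_one_add_norm_rpow_rpow_neg hk hkq) (fun _ => by positivity) (by positivity)

theorem lintegral_rpow_le_mass_add_potential (hm0 : 0 < m) (hm1 : m < 1)
    (hf : Measurable f) (hf0 : 0 ≤ f)
    (hψ : Integrable (fun z : E => (1 + ‖z‖ ^ k) ^ (-(m / (1 - m)))) μ) {ρ : ℝ} (hρ : 0 < ρ)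
    (x : E) :
    ∫⁻ y, ENNReal.ofReal (f y ^ m) ∂μ ≤
      (∫⁻ y, ENNReal.ofReal (f y) ∂μ +
          (ENNReal.ofReal (ρ ^ k))⁻¹ * ∫⁻ y, ENNReal.ofReal (‖x - y‖ ^ k * f y) ∂μ) ^ m *
        ENNReal.ofReal (ρ ^ finrank ℝ E * ∫ z, (1 + ‖z‖ ^ k) ^ (-(m / (1 - m))) ∂μ) ^ (1 - m) := by
  set φ : E → ℝ := fun y => 1 + (‖y - x‖ / ρ) ^ k with hφ
  have hφpos : ∀ y, 0 < φ y := fun y => by positivity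
  have hφmeas : Measurable φ := by fun_prop
  have holder := lintegral_rpow_le_of_weight (μ := μ) hm0 hm1 hf.ennreal_ofReal.aemeasurable
    hφmeas.ennreal_ofReal.aemeasurable (fun y => (ENNReal.ofReal_pos.2 (hφpos y)).ne')
    (fun _ => ENNReal.ofReal_ne_top)
  have hsplit : ∀ y, ENNReal.ofReal (f y) * ENNReal.ofReal (φ y) = ENNReal.ofReal (f y) +
      (ENNReal.ofReal (ρ ^ k))⁻¹ * ENNReal.ofReal (‖x - y‖ ^ k * f y) := fun y => by
    rw [hφ, ENNReal.ofReal_add zero_le_one (by positivity), div_rpow (norm_nonneg _) hρ.le,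
      ENNReal.ofReal_div_of_pos (by positivity), ENNReal.ofReal_mul (by positivity),
      norm_sub_rev, ENNReal.ofReal_one, div_eq_mul_inv]
    ring
  have hweight : ∀ y, ENNReal.ofReal (φ y) ^ (-(m / (1 - m))) =
      ENNReal.ofReal (φ y ^ (-(m / (1 - m)))) := fun y =>
    ENNReal.ofReal_rpow_of_pos (hφpos y)
  simp only [hsplit, hweight, ENNReal.ofReal_rpow_of_nonneg (hf0 _) hm0.le] at holder
  rwa [lintegral_add_left hf.ennreal_ofReal,
    lintegral_const_mul' _ _ (ENNReal.inv_ne_top.2 (by positivity)),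
    ← ofReal_integral_eq_lintegral_ofReal (integrable_one_add_div_rpow_rpow_neg hψ hρ x)
      (Filter.Eventually.of_forall fun y => (rpow_pos_of_pos (hφpos y) _).le),
    integral_one_add_div_rpow_rpow_neg hρ x] at holder

theorem ofReal_integral_mul_rpow_le_potential (hm0 : 0 < m) (hm1 : m < 1)
    (hf : Measurable f) (hf0 : 0 ≤ f) (hfi : Integrable f μ)
    (hfmi : Integrable (fun y => f y ^ m) μ)
    (hψ : Integrable (fun z : E => (1 + ‖z‖ ^ k) ^ (-(m / (1 - m)))) μ)
    (hK : 0 < ∫ z, (1 + ‖z‖ ^ k) ^ (-(m / (1 - m))) ∂μ) {ρ : ℝ} (hρ : 0 < ρ)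
    (hρ_opt : (2 * ∫ y, f y ∂μ) ^ m *
        (ρ ^ finrank ℝ E * ∫ z, (1 + ‖z‖ ^ k) ^ (-(m / (1 - m))) ∂μ) ^ (1 - m) ≤
      ∫ y, f y ^ m ∂μ)
    (x : E) :
    ENNReal.ofReal ((∫ y, f y ∂μ) * ρ ^ k) ≤ ∫⁻ y, ENNReal.ofReal (‖x - y‖ ^ k * f y) ∂μ := by
  have hA : 0 ≤ ∫ y, f y ∂μ := integral_nonneg hf0
  have hc : 0 < ρ ^ finrank ℝ E * ∫ z, (1 + ‖z‖ ^ k) ^ (-(m / (1 - m))) ∂μ := by positivity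
  have hkernel := lintegral_rpow_le_mass_add_potential hm0 hm1 hf hf0 hψ hρ x
  rw [← ofReal_integral_eq_lintegral_ofReal hfi (.of_forall hf0),
    ← ofReal_integral_eq_lintegral_ofReal hfmi (.of_forall fun y => rpow_nonneg (hf0 y) m)]
    at hkernel
  rw [ENNReal.ofReal_mul hA]
  refine ENNReal.mul_le_of_two_mul_rpow_le hm0 ENNReal.ofReal_ne_top
    (ENNReal.ofReal_pos.2 (rpow_pos_of_pos hρ k)).ne' ENNReal.ofReal_ne_top
    (ENNReal.rpow_pos (ENNReal.ofReal_pos.2 hc) ENNReal.ofReal_ne_top).ne'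
    (ENNReal.rpow_ne_top_of_nonneg (by linarith) ENNReal.ofReal_ne_top) ?_ hkernel
  rw [← ENNReal.ofReal_ofNat 2, ← ENNReal.ofReal_mul zero_le_two,
    ENNReal.ofReal_rpow_of_nonneg (by positivity) hm0.le,
    ENNReal.ofReal_rpow_of_nonneg hc.le (by linarith), ← ENNReal.ofReal_mul (by positivity)]
  exact ENNReal.ofReal_le_ofReal hρ_opt

end HaarMeasure

theorem ofReal_integral_mul_le_lintegral_lintegral {α : Type*} [MeasurableSpace α]
    {μ : Measure α} {f : α → ℝ} (hf0 : 0 ≤ f) (hfi : Integrable f μ) (κ : α → α → ℝ) {c : ℝ}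
    (h : ∀ x, ENNReal.ofReal c ≤ ∫⁻ y, ENNReal.ofReal (κ x y * f y) ∂μ) :
    ENNReal.ofReal ((∫ x, f x ∂μ) * c) ≤
      ∫⁻ x, ∫⁻ y, ENNReal.ofReal (f x * κ x y * f y) ∂μ ∂μ := calc
  ENNReal.ofReal ((∫ x, f x ∂μ) * c)
      = ∫⁻ x, ENNReal.ofReal (f x) * ENNReal.ofReal c ∂μ := by
    rw [lintegral_mul_const' _ _ ENNReal.ofReal_ne_top,
      ← ofReal_integral_eq_lintegral_ofReal hfi (.of_forall hf0),
      ENNReal.ofReal_mul (integral_nonneg hf0)]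
  _ ≤ ∫⁻ x, ENNReal.ofReal (f x) * ∫⁻ y, ENNReal.ofReal (κ x y * f y) ∂μ ∂μ :=
    lintegral_mono fun x => mul_le_mul_right (h x) _
  _ = ∫⁻ x, ∫⁻ y, ENNReal.ofReal (f x * κ x y * f y) ∂μ ∂μ := by
    refine lintegral_congr fun x => ?_
    rw [← lintegral_const_mul' _ _ ENNReal.ofReal_ne_top]
    simp_rw [mul_assoc, ENNReal.ofReal_mul (hf0 x)]

theorem exists_balancing_scale {A B K m k : ℝ} {n : ℕ} (hA : 0 < A) (hB : 0 < B) (hK : 0 < K)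
    (hm1 : m < 1) (hn : 0 < n) :
    ∃ ρ > 0, (2 * A) ^ m * (ρ ^ n * K) ^ (1 - m) = B ∧
      A * (A * ρ ^ k) = (2 ^ m * K ^ (1 - m)) ^ (-(k / (n * (1 - m)))) *
        A ^ (2 - m * (k / (n * (1 - m)))) * B ^ (k / (n * (1 - m))) := by
  have h1m : 0 < 1 - m := sub_pos.2 hm1
  have hn : (0 : ℝ) < n := by exact_mod_cast hn
  set X := B / ((2 * A) ^ m * K ^ (1 - m)) with hX
  have hX0 : 0 < X := by positivity
  refine ⟨X ^ (1 / (n * (1 - m))), by positivity, ?_, ?_⟩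
  · rw [← rpow_natCast, ← rpow_mul hX0.le, mul_rpow (by positivity) hK.le, ← rpow_mul hX0.le,
      show 1 / (n * (1 - m)) * n * (1 - m) = 1 by field_simp, rpow_one, hX]
    field_simp
  · have hD : (2 * A) ^ m * K ^ (1 - m) = A ^ m * (2 ^ m * K ^ (1 - m)) := by
      rw [mul_rpow zero_le_two hA.le]; ring
    rw [← rpow_mul hX0.le, one_div_mul_eq_div, hX, hD, rpow_neg (by positivity),
      div_rpow hB.le (by positivity), mul_rpow (rpow_nonneg hA.le m) (by positivity),
      rpow_sub hA, ← rpow_mul hA.le, rpow_two]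
    field_simp

/-- Reversed Hardy–Littlewood–Sobolev inequality: for `d ≥ 1`,
`k > 0`, `d/(d+k) < m < 1` and `α = 2 − km/(d(1−m))`, there is a constant
`C > 0` such that for every nonnegative measurable `f ∈ L¹(ℝ^d)`, not a.e.
zero, with `∫ f^m < ∞`,
`∬ f(x)|x−y|^k f(y) dx dy ≥ C (∫ f)^α (∫ f^m)^{(2−α)/m}`.
The double integral of the nonnegative integrand is taken in the extended
nonnegative reals (if it is infinite the inequality holds trivially). -/
theorem reversed_hls (d : ℕ) (hd : 1 ≤ d) (k : ℝ) (hk : 0 < k)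
    (m : ℝ) (hm_lb : (d : ℝ) / (d + k) < m) (hm_ub : m < 1)
    (α : ℝ) (hα : α = 2 - k * m / (d * (1 - m))) :
    ∃ C : ℝ, 0 < C ∧
      ∀ f : EuclideanSpace ℝ (Fin d) → ℝ, Measurable f → (∀ x, 0 ≤ f x) →
        Integrable f → ¬ (f =ᵐ[volume] 0) → Integrable (fun x => f x ^ m) →
        ENNReal.ofReal
            (C * (∫ x, f x) ^ α * (∫ x, f x ^ m) ^ ((2 - α) / m))
          ≤ ∫⁻ x, ∫⁻ y, ENNReal.ofReal (f x * ‖x - y‖ ^ k * f y) := by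
  have hd0 : (0 : ℝ) < d := by exact_mod_cast hd
  have hm0 : 0 < m := (div_pos hd0 (by linarith)).trans hm_lb
  have hkq : (finrank ℝ (EuclideanSpace ℝ (Fin d)) : ℝ) < k * (m / (1 - m)) := by
    rw [finrank_euclideanSpace_fin, ← mul_div_assoc, lt_div_iff₀ (sub_pos.2 hm_ub)]
    linarith [(div_lt_iff₀ (by positivity : (0 : ℝ) < d + k)).1 hm_lb]
  set K := ∫ z : EuclideanSpace ℝ (Fin d), (1 + ‖z‖ ^ k) ^ (-(m / (1 - m)))
  have hK : 0 < K := integral_one_add_norm_rpow_rpow_neg_pos hk hkq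
  have hα' : α = 2 - m * (k / (d * (1 - m))) := by rw [hα]; ring
  have hαβ : (2 - α) / m = k / (d * (1 - m)) := by rw [hα']; field_simp; ring
  refine ⟨(2 ^ m * K ^ (1 - m)) ^ (-(k / (d * (1 - m)))), by positivity, ?_⟩
  intro f hf hf0 hfi hf_ne hfmi
  have hA : 0 < ∫ x, f x := by
    simpa using integral_rpow_pos hf0 hf_ne one_pos (by simpa using hfi)
  obtain ⟨ρ, hρ, hρ_opt, hvalue⟩ := exists_balancing_scale hA
    (integral_rpow_pos hf0 hf_ne hm0 hfmi) hK hm_ub (k := k) hd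
  rw [hαβ, hα', ← hvalue]
  refine ofReal_integral_mul_le_lintegral_lintegral hf0 hfi (fun x y => ‖x - y‖ ^ k) fun x => ?_
  exact ofReal_integral_mul_rpow_le_potential hm0 hm_ub hf hf0 hfi hfmi
    (integrable_one_add_norm_rpow_rpow_neg hk hkq) hK hρ
    (by rw [finrank_euclideanSpace_fin, hρ_opt]) x
end

section
/- Consider the one-dimensional semi-discrete finite-volume scheme on a grid of N ≥ 2 cells with mesh size Δx > 0 and no-flux boundary conditions: given H : [0,∞) → ℝ convex and C¹, values V_i ∈ ℝ (i = 1,…,N), and symmetric interaction weights W_j = W_{−j} ∈ ℝ (|j| ≤ N−1), define ξ_i = H′(ρ_i) + V_i + Δx Σ_{k=1}^{N} W_{i−k} ρ_k, velocities u_{i+1/2} = −(ξ_{i+1} − ξ_i)/Δx for i = 1,…,N−1, upwind fluxes F_{i+1/2} = ρ_i (u_{i+1/2})⁺ + ρ_{i+1} (u_{i+1/2})⁻ for i = 1,…,N−1 and F_{1/2} = F_{N+1/2} = 0, where (s)⁺ = max{0,s} and (s)⁻ = min{0,s}, and the ODE system dρ_i/dt = −(F_{i+1/2} − F_{i−1/2})/Δx.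 If t ↦ (ρ_i(t))_{i=1}^N is a C¹ solution on [0,T] with ρ_i(0) ≥ 0 for all i, then ρ_i(t) ≥ 0 for all i and all t ∈ [0,T], and the discrete mass Δx Σ_{i=1}^{N} ρ_i(t) is constant in time. -/
/-!
Across an edge separating a cell with `ρ ≤ 0` from a cell with `ρ ≥ 0`, the upwind flux
carries mass into the nonpositive cell. Hence the fluxes drive the total content of any set
of nonpositive cells (all other cells being nonnegative) upwards. Applied to the cells where
`ρ` is negative, or zero and decreasing, this says that the total negative part
`∑ᵢ min (ρᵢ, 0)` has a nonnegative right derivative; it starts at `0` and is `≤ 0`, so it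
stays `0`. Mass is conserved because the fluxes telescope and vanish at both boundaries.
-/

open Real Set

noncomputable section

/-- Discrete potential `ξ_i = H′(ρ_i) + V_i + Δx Σ_{k<N} W_{i−k} ρ_k`
(cells are indexed by `i = 0, …, N−1`). -/
def xiSD (N : ℕ) (Δx : ℝ) (H' : ℝ → ℝ) (V : ℕ → ℝ) (W : ℤ → ℝ)
    (ρ : ℕ → ℝ) (i : ℕ) : ℝ :=
  H' (ρ i) + V i + Δx * ∑ k ∈ Finset.range N, W ((i : ℤ) - (k : ℤ)) * ρ k

/-- Discrete velocity at the edge `e` between cells `e−1` and `e`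
(for `1 ≤ e ≤ N−1`): `u_{e−1/2+1} = −(ξ_e − ξ_{e−1})/Δx`. -/
def velSD (N : ℕ) (Δx : ℝ) (H' : ℝ → ℝ) (V : ℕ → ℝ) (W : ℤ → ℝ)
    (ρ : ℕ → ℝ) (e : ℕ) : ℝ :=
  -(xiSD N Δx H' V W ρ e - xiSD N Δx H' V W ρ (e - 1)) / Δx

/-- Upwind flux at edge `e`; the no-flux boundary conditions impose
`F_0 = F_N = 0`, and at interior edges
`F_e = ρ_{e−1} (u_e)⁺ + ρ_e (u_e)⁻` with `(s)⁺ = max{s,0}`, `(s)⁻ = min{s,0}`. -/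
def fluxSD (N : ℕ) (Δx : ℝ) (H' : ℝ → ℝ) (V : ℕ → ℝ) (W : ℤ → ℝ)
    (ρ : ℕ → ℝ) (e : ℕ) : ℝ :=
  if e = 0 ∨ N ≤ e then 0
  else ρ (e - 1) * max (velSD N Δx H' V W ρ e) 0
        + ρ e * min (velSD N Δx H' V W ρ e) 0


open Finset

theorem Finset.sum_sub_succ_nonneg {F : ℕ → ℝ} {K : Finset ℕ} (h0 : 0 ≤ F 0)
    (hin : ∀ i ∈ K, i - 1 ∉ K → 0 ≤ F i) (hout : ∀ i ∈ K, i + 1 ∉ K → F (i + 1) ≤ 0) :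
    0 ≤ ∑ i ∈ K, (F i - F (i + 1)) := by
  have hshift : ∑ i ∈ K, F (i + 1) = ∑ i ∈ K.image (· + 1), F i :=
    (sum_image fun _ _ _ _ h => Nat.succ_injective h).symm
  rw [sum_sub_distrib, hshift, ← sum_sdiff_sub_sum_sdiff, sub_nonneg]
  calc ∑ i ∈ K.image (· + 1) \ K, F i ≤ 0 := sum_nonpos fun i hi => by
        obtain ⟨hi, hiK⟩ := mem_sdiff.1 hi
        obtain ⟨j, hj, rfl⟩ := mem_image.1 hi
        exact hout j hj hiK
    _ ≤ ∑ i ∈ K \ K.image (· + 1), F i := sum_nonneg fun i hi => by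
        obtain ⟨hiK, hi⟩ := mem_sdiff.1 hi
        rcases i with _ | j
        · exact h0
        · exact hin _ hiK fun hj => hi (mem_image_of_mem _ hj)

section UpwindFlux

variable {N : ℕ} {Δx : ℝ} {H' : ℝ → ℝ} {V : ℕ → ℝ} {W : ℤ → ℝ} {η : ℕ → ℝ} {e : ℕ}

theorem fluxSD_zero : fluxSD N Δx H' V W η 0 = 0 := by
  simp [fluxSD]

theorem fluxSD_of_le (he : N ≤ e) : fluxSD N Δx H' V W η e = 0 := by
  simp [fluxSD, he]

theorem fluxSD_nonneg (hl : 0 ≤ η (e - 1)) (hr : η e ≤ 0) : 0 ≤ fluxSD N Δx H' V W η e := by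
  unfold fluxSD
  split_ifs
  · exact le_rfl
  · exact add_nonneg (mul_nonneg hl (le_max_right _ _))
      (mul_nonneg_of_nonpos_of_nonpos hr (min_le_right _ _))

theorem fluxSD_nonpos (hl : η (e - 1) ≤ 0) (hr : 0 ≤ η e) : fluxSD N Δx H' V W η e ≤ 0 := by
  unfold fluxSD
  split_ifs
  · exact le_rfl
  · exact add_nonpos (mul_nonpos_of_nonpos_of_nonneg hl (le_max_right _ _))
      (mul_nonpos_of_nonneg_of_nonpos hr (min_le_right _ _))

theorem sum_range_fluxSD_sub_succ :
    ∑ i ∈ range N, (fluxSD N Δx H' V W η i - fluxSD N Δx H' V W η (i + 1)) = 0 := by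
  rw [sum_range_sub', fluxSD_zero, fluxSD_of_le le_rfl, sub_zero]

theorem sum_fluxSD_sub_succ_nonneg {K : Finset ℕ} (hK : K ⊆ range N)
    (hneg : ∀ i ∈ K, η i ≤ 0) (hpos : ∀ i ∈ range N \ K, 0 ≤ η i) :
    0 ≤ ∑ i ∈ K, (fluxSD N Δx H' V W η i - fluxSD N Δx H' V W η (i + 1)) := by
  refine sum_sub_succ_nonneg fluxSD_zero.ge (fun i hi hi' => ?_) (fun i hi hi' => ?_)
  · exact fluxSD_nonneg (hpos _ (mem_sdiff.2 ⟨mem_range.2 (by have := mem_range.1 (hK hi); omega), hi'⟩))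
      (hneg i hi)
  · by_cases hN : i + 1 < N
    · exact fluxSD_nonpos (hneg i hi) (hpos _ (mem_sdiff.2 ⟨mem_range.2 hN, hi'⟩))
    · exact (fluxSD_of_le (not_lt.1 hN)).le

end UpwindFlux

open Filter Topology Asymptotics

theorem HasDerivWithinAt.min_zero_Ici {f : ℝ → ℝ} {f' x : ℝ}
    (hf : HasDerivWithinAt f f' (Ici x) x) :
    HasDerivWithinAt (fun s => min (f s) 0) (if f x < 0 ∨ f x = 0 ∧ f' < 0 then f' else 0)
      (Ici x) x := by
  rcases lt_trichotomy (f x) 0 with hneg | hzero | hpos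
  · have hev : (fun s => min (f s) 0) =ᶠ[𝓝[Ici x] x] f :=
      (hf.continuousWithinAt.eventually (gt_mem_nhds hneg)).mono fun _ hs => min_eq_left hs.le
    simpa [hneg] using hf.congr_of_eventuallyEq hev (min_eq_left hneg.le)
  · have hmin : (if f x < 0 ∨ f x = 0 ∧ f' < 0 then f' else 0) = min f' 0 := by
      split_ifs with h
      · have h' : f' < 0 := by simpa [hzero] using h
        exact (min_eq_left h'.le).symm
      · have h' : 0 ≤ f' := by simpa [hzero] using h
        exact (min_eq_right h').symm
    rw [hmin, hasDerivWithinAt_iff_isLittleO]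
    rw [hasDerivWithinAt_iff_isLittleO] at hf
    -- `min (·) 0` is 1-Lipschitz and commutes with multiplication by `s - x ≥ 0`.
    refine IsBigO.trans_isLittleO (IsBigO.of_bound 1 ?_) hf
    filter_upwards [self_mem_nhdsWithin] with s (hs : x ≤ s)
    simp only [smul_eq_mul, hzero, min_self, sub_zero, one_mul, Real.norm_eq_abs]
    rw [mul_min_of_nonneg _ _ (sub_nonneg.2 hs), mul_zero]
    simpa using abs_min_sub_min_le_max (f s) 0 ((s - x) * f') 0
  · have hev : (fun s => min (f s) 0) =ᶠ[𝓝[Ici x] x] fun _ => 0 :=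
      (hf.continuousWithinAt.eventually (lt_mem_nhds hpos)).mono fun _ hs => min_eq_right hs.le
    simpa [hpos.not_gt, hpos.ne'] using
      (hasDerivWithinAt_const x (Ici x) (0 : ℝ)).congr_of_eventuallyEq hev (min_eq_right hpos.le)

section Flow

variable {ι : Type*} {s : Finset ι} {ρ ρ' : ℝ → ι → ℝ} {a b : ℝ}

theorem HasDerivWithinAt.Ici_of_Icc {f : ℝ → ℝ} {f' x : ℝ}
    (hf : HasDerivWithinAt f f' (Icc a b) x) (hx : x ∈ Ico a b) :
    HasDerivWithinAt f f' (Ici x) x :=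
  hf.mono_of_mem_nhdsWithin (Icc_mem_nhdsGE_of_mem hx)

theorem continuousOn_sum_of_hasDerivWithinAt {φ : ℝ → ℝ}
    (hρ : ∀ t ∈ Icc a b, ∀ i ∈ s, HasDerivWithinAt (ρ · i) (ρ' t i) (Icc a b) t)
    (hφ : Continuous φ) : ContinuousOn (fun t => ∑ i ∈ s, φ (ρ t i)) (Icc a b) :=
  continuousOn_finsetSum _ fun i hi t ht =>
    hφ.continuousAt.comp_continuousWithinAt (hρ t ht i hi).continuousWithinAt

theorem sum_eq_of_sum_hasDerivWithinAt_eq_zero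
    (hρ : ∀ t ∈ Icc a b, ∀ i ∈ s, HasDerivWithinAt (ρ · i) (ρ' t i) (Icc a b) t)
    (hρ' : ∀ t ∈ Ico a b, ∑ i ∈ s, ρ' t i = 0) :
    ∀ t ∈ Icc a b, ∑ i ∈ s, ρ t i = ∑ i ∈ s, ρ a i :=
  constant_of_has_deriv_right_zero (continuousOn_sum_of_hasDerivWithinAt hρ continuous_id)
    fun t ht => hρ' t ht ▸ HasDerivWithinAt.fun_sum fun i hi =>
      (hρ t (Ico_subset_Icc_self ht) i hi).Ici_of_Icc ht

theorem nonneg_of_hasDerivWithinAt_of_sum_nonneg [DecidableEq ι]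
    (hρ : ∀ t ∈ Icc a b, ∀ i ∈ s, HasDerivWithinAt (ρ · i) (ρ' t i) (Icc a b) t)
    (hρ' : ∀ t ∈ Ico a b, ∀ K ⊆ s, (∀ i ∈ K, ρ t i ≤ 0) → (∀ i ∈ s \ K, 0 ≤ ρ t i) →
      0 ≤ ∑ i ∈ K, ρ' t i)
    (ha : ∀ i ∈ s, 0 ≤ ρ a i) :
    ∀ t ∈ Icc a b, ∀ i ∈ s, 0 ≤ ρ t i := by
  set M : ℝ → ℝ := fun t => ∑ i ∈ s, min (ρ t i) 0
  -- the indices whose negative part is, or is about to become, nonzero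
  let K (t : ℝ) : Finset ι := s.filter fun i => ρ t i < 0 ∨ ρ t i = 0 ∧ ρ' t i < 0
  have hM' : ∀ t ∈ Ico a b, HasDerivWithinAt M (∑ i ∈ K t, ρ' t i) (Ici t) t := fun t ht => by
    rw [sum_filter]
    exact HasDerivWithinAt.fun_sum fun i hi =>
      ((hρ t (Ico_subset_Icc_self ht) i hi).Ici_of_Icc ht).min_zero_Ici
  have hK : ∀ t ∈ Ico a b, 0 ≤ ∑ i ∈ K t, ρ' t i := fun t ht =>
    hρ' t ht _ (filter_subset _ _)
      (fun i hi => by rcases (mem_filter.1 hi).2 with h | h <;> [exact h.le; exact h.1.le])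
      (fun i hi => by
        obtain ⟨his, hiK⟩ := mem_sdiff.1 hi
        by_contra h
        exact hiK (mem_filter.2 ⟨his, Or.inl (not_le.1 h)⟩))
  have hMa : -M a ≤ 0 := by
    simp only [M, neg_nonpos]
    exact sum_nonneg fun i hi => (min_eq_right (ha i hi)).ge
  have hM := image_le_of_deriv_right_le_deriv_boundary (f := fun t => -M t)
    (continuousOn_sum_of_hasDerivWithinAt (φ := fun r => min r 0) hρ
      (continuous_id.min continuous_const)).neg
    (fun t ht => (hM' t ht).neg) hMa continuousOn_const
    (fun t _ => hasDerivWithinAt_const t _ 0) (fun t ht => neg_nonpos.2 (hK t ht))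
  intro t ht i hi
  have hi_le : -min (ρ t i) 0 ≤ ∑ j ∈ s, -min (ρ t j) 0 :=
    single_le_sum (f := fun j => -min (ρ t j) 0) (fun j _ => neg_nonneg.2 (min_le_right _ _)) hi
  rw [sum_neg_distrib] at hi_le
  linarith [min_le_left (ρ t i) 0, show -M t ≤ 0 from hM ht]

end Flow

theorem semidiscrete_mass_nonneg_general
    (N : ℕ) (Δx T : ℝ) (hΔx : 0 < Δx)
    (H' : ℝ → ℝ)
    (V : ℕ → ℝ) (W : ℤ → ℝ)
    (ρ : ℝ → ℕ → ℝ)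
    (hODE : ∀ t ∈ Icc (0 : ℝ) T, ∀ i < N,
      HasDerivWithinAt (fun s => ρ s i)
        (-(fluxSD N Δx H' V W (ρ t) (i + 1) - fluxSD N Δx H' V W (ρ t) i) / Δx)
        (Icc 0 T) t)
    (h0 : ∀ i < N, 0 ≤ ρ 0 i) :
    ∀ t ∈ Icc (0 : ℝ) T,
      (∀ i < N, 0 ≤ ρ t i) ∧
      Δx * ∑ i ∈ Finset.range N, ρ t i = Δx * ∑ i ∈ Finset.range N, ρ 0 i := by
  have hρ : ∀ t ∈ Icc (0 : ℝ) T, ∀ i ∈ range N, HasDerivWithinAt (ρ · i)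
      ((fluxSD N Δx H' V W (ρ t) i - fluxSD N Δx H' V W (ρ t) (i + 1)) / Δx) (Icc 0 T) t :=
    fun t ht i hi => neg_sub (fluxSD N Δx H' V W (ρ t) (i + 1)) _ ▸ hODE t ht i (mem_range.1 hi)
  have hnonneg := nonneg_of_hasDerivWithinAt_of_sum_nonneg hρ
    (fun t _ K hK hneg hpos => by
      rw [← sum_div]
      exact div_nonneg (sum_fluxSD_sub_succ_nonneg hK hneg hpos) hΔx.le)
    (fun i hi => h0 i (mem_range.1 hi))
  have hmass := sum_eq_of_sum_hasDerivWithinAt_eq_zero hρ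
    (fun t _ => by rw [← sum_div, sum_range_fluxSD_sub_succ, zero_div])
  exact fun t ht => ⟨fun i hi => hnonneg t ht i (mem_range.2 hi), by rw [hmass t ht]⟩

/-- Conservation of mass and non-negativity for the semi-discrete
finite-volume scheme
`dρ_i/dt = −(F_{i+1/2} − F_{i−1/2})/Δx` with no-flux boundary conditions:
a `C¹` solution on `[0,T]` with nonnegative initial data stays nonnegative and
has constant discrete mass `Δx Σ_i ρ_i(t)`. -/
theorem semidiscrete_mass_nonneg
    (N : ℕ) (hN : 2 ≤ N) (Δx T : ℝ) (hΔx : 0 < Δx) (hT : 0 < T)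
    (H H' : ℝ → ℝ) (hHconv : ConvexOn ℝ (Ici 0) H)
    (hH' : ∀ s ∈ Ici (0 : ℝ), HasDerivWithinAt H (H' s) (Ici 0) s)
    (hH'cont : ContinuousOn H' (Ici 0))
    (V : ℕ → ℝ) (W : ℤ → ℝ) (hWsymm : ∀ j : ℤ, W (-j) = W j)
    (ρ : ℝ → ℕ → ℝ)
    (hC1 : ∀ i < N, ContDiffOn ℝ 1 (fun t => ρ t i) (Icc 0 T))
    (hODE : ∀ t ∈ Icc (0 : ℝ) T, ∀ i < N,
      HasDerivWithinAt (fun s => ρ s i)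
        (-(fluxSD N Δx H' V W (ρ t) (i + 1) - fluxSD N Δx H' V W (ρ t) i) / Δx)
        (Icc 0 T) t)
    (h0 : ∀ i < N, 0 ≤ ρ 0 i) :
    ∀ t ∈ Icc (0 : ℝ) T,
      (∀ i < N, 0 ≤ ρ t i) ∧
      Δx * ∑ i ∈ Finset.range N, ρ t i = Δx * ∑ i ∈ Finset.range N, ρ 0 i :=
  semidiscrete_mass_nonneg_general N Δx T hΔx H' V W ρ hODE h0
end
end

section
/- Consider the one-dimensional fully discrete implicit finite-volume scheme on a grid of N ≥ 2 cells with mesh size Δx > 0, time step Δt > 0, and no-flux boundary conditions: given H : [0,∞) → ℝ convex and C¹, values V_i ∈ ℝ, and symmetric weights W_j = W_{−j} ∈ ℝ, suppose the sequence (ρ_i^n)_{i=1,…,N}, n = 0,1,2,…, satisfies, with ρ_i^{**} = (ρ_i^n + ρ_i^{n+1})/2, ξ_i^{n+1} = H′(ρ_i^{n+1}) + V_i + Δx Σ_{k=1}^{N} W_{i−k} ρ_k^{**}, u_{i+1/2}^{n+1} = −(ξ_{i+1}^{n+1} − ξ_i^{n+1})/Δx, F_{i+1/2}^{n+1} = ρ_i^{n+1}(u_{i+1/2}^{n+1})⁺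 + ρ_{i+1}^{n+1}(u_{i+1/2}^{n+1})⁻ for i = 1,…,N−1, F_{1/2}^{n+1} = F_{N+1/2}^{n+1} = 0, and (ρ_i^{n+1} − ρ_i^n)/Δt + (F_{i+1/2}^{n+1} − F_{i−1/2}^{n+1})/Δx = 0. If ρ_i^0 ≥ 0 for all i, then for every n ≥ 0 one has ρ_i^n ≥ 0 for all i, and the discrete mass Δx Σ_{i=1}^{N} ρ_i^n equals Δx Σ_{i=1}^{N} ρ_i^0. -/
open Real Set

noncomputable section

/-- Fully discrete potential
`ξ_i^{n+1} = H′(ρ_i^{n+1}) + V_i + Δx Σ_{k<N} W_{i−k} ρ_k^{**}` with the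
semi-implicit midpoint `ρ_k^{**} = (ρ_k^n + ρ_k^{n+1})/2`; `ρold = ρ^n`,
`ρnew = ρ^{n+1}` (cells are indexed by `i = 0, …, N−1`). -/
def xiFD (N : ℕ) (Δx : ℝ) (H' : ℝ → ℝ) (V : ℕ → ℝ) (W : ℤ → ℝ)
    (ρold ρnew : ℕ → ℝ) (i : ℕ) : ℝ :=
  H' (ρnew i) + V i
    + Δx * ∑ k ∈ Finset.range N, W ((i : ℤ) - (k : ℤ)) * ((ρold k + ρnew k) / 2)

/-- Fully discrete velocity at the edge `e` between cells `e−1` and `e`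
(for `1 ≤ e ≤ N−1`): `u_e^{n+1} = −(ξ_e^{n+1} − ξ_{e−1}^{n+1})/Δx`. -/
def velFD (N : ℕ) (Δx : ℝ) (H' : ℝ → ℝ) (V : ℕ → ℝ) (W : ℤ → ℝ)
    (ρold ρnew : ℕ → ℝ) (e : ℕ) : ℝ :=
  -(xiFD N Δx H' V W ρold ρnew e - xiFD N Δx H' V W ρold ρnew (e - 1)) / Δx

/-- Fully discrete upwind flux at edge `e`; the no-flux boundary conditions
impose `F_0 = F_N = 0`, and at interior edges
`F_e^{n+1} = ρ_{e−1}^{n+1} (u_e^{n+1})⁺ + ρ_e^{n+1} (u_e^{n+1})⁻` with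
`(s)⁺ = max{s,0}`, `(s)⁻ = min{s,0}`. -/
def fluxFD (N : ℕ) (Δx : ℝ) (H' : ℝ → ℝ) (V : ℕ → ℝ) (W : ℤ → ℝ)
    (ρold ρnew : ℕ → ℝ) (e : ℕ) : ℝ :=
  if e = 0 ∨ N ≤ e then 0
  else ρnew (e - 1) * max (velFD N Δx H' V W ρold ρnew e) 0
        + ρnew e * min (velFD N Δx H' V W ρold ρnew e) 0

open Classical in
lemma key_step (N : ℕ) (c : ℝ) (hc : 0 ≤ c)
    (ρo ρn u : ℕ → ℝ) (F : ℕ → ℝ)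
    (hF : ∀ e, F e = if e = 0 ∨ N ≤ e then 0
        else ρn (e - 1) * max (u e) 0 + ρn e * min (u e) 0)
    (hstep : ∀ i < N, ρn i = ρo i - c * (F (i + 1) - F i))
    (hpos : ∀ i < N, 0 ≤ ρo i) :
    (∀ i < N, 0 ≤ ρn i) ∧
      ∑ i ∈ Finset.range N, ρn i = ∑ i ∈ Finset.range N, ρo i := by
  have hF0 : F 0 = 0 := by rw [hF]; simp
  have hFN : ∀ e, N ≤ e → F e = 0 := by intro e he; rw [hF]; simp [he]
  have tele : ∀ a b : ℕ, a ≤ b →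
      ∑ j ∈ Finset.Ico a b, (F (j + 1) - F j) = F b - F a := by
    intro a b hab
    rw [Finset.sum_Ico_eq_sub _ hab, Finset.sum_range_sub, Finset.sum_range_sub]
    ring
  constructor
  · -- positivity
    by_contra hcon
    push_neg at hcon
    obtain ⟨i, hiN, hineg⟩ := hcon
    -- left endpoint
    have hex : ∃ a, a ≤ i ∧ ∀ j, a ≤ j → j ≤ i → ρn j < 0 :=
      ⟨i, le_refl i, fun j h1 h2 => by
        have : j = i := le_antisymm h2 h1
        simpa [this] using hineg⟩
    set a := Nat.find hex with ha
    obtain ⟨hai, haneg⟩ := Nat.find_spec hex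
    have haL : a ≠ 0 → 0 ≤ ρn (a - 1) := by
      intro h0a
      have hlt : a - 1 < a := Nat.sub_lt (Nat.pos_of_ne_zero h0a) one_pos
      have hm := Nat.find_min hex hlt
      push_neg at hm
      obtain ⟨j, h1, h2, h3⟩ := hm (le_trans (Nat.sub_le a 1) hai)
      rcases Nat.lt_or_ge j a with hja | hja
      · have : j = a - 1 := le_antisymm (Nat.le_sub_one_of_lt hja) h1
        rwa [this] at h3
      · exact absurd (haneg j hja h2) (not_lt_of_ge h3)
    -- right endpoint
    have hRi : i < N ∧ i ≤ i ∧ ∀ j, i ≤ j → j ≤ i → ρn j < 0 :=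
      ⟨hiN, le_refl i, fun j h1 h2 => by
        have : j = i := le_antisymm h2 h1
        simpa [this] using hineg⟩
    have hiN1 : i ≤ N - 1 := Nat.le_sub_one_of_lt hiN
    set R : ℕ → Prop := fun b => b < N ∧ i ≤ b ∧ ∀ j, i ≤ j → j ≤ b → ρn j < 0
      with hRdef
    set b := Nat.findGreatest R (N - 1) with hb
    have hib : i ≤ b := Nat.le_findGreatest hiN1 hRi
    obtain ⟨hbN, hib', hbneg⟩ : R b := Nat.findGreatest_spec hiN1 hRi
    have hbR : b + 1 < N → 0 ≤ ρn (b + 1) := by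
      intro hb1
      have hg := Nat.findGreatest_is_greatest (Nat.lt_succ_self b)
        (Nat.le_sub_one_of_lt hb1)
      rw [hRdef] at hg
      simp only [] at hg
      push_neg at hg
      obtain ⟨j, h1, h2, h3⟩ := hg hb1 (le_trans hib' (Nat.le_succ b))
      rcases Nat.lt_or_ge j (b + 1) with hj | hj
      · exact absurd (hbneg j h1 (Nat.lt_succ_iff.mp hj)) (not_lt_of_ge h3)
      · have : j = b + 1 := le_antisymm h2 hj
        rwa [this] at h3
    have hab : a ≤ b := le_trans hai hib
    -- all negative on [a,b]
    have hallneg : ∀ j ∈ Finset.Icc a b, ρn j < 0 := by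
      intro j hj
      rw [Finset.mem_Icc] at hj
      rcases le_or_gt j i with h | h
      · exact haneg j hj.1 h
      · exact hbneg j h.le hj.2
    -- flux signs
    have hFa : 0 ≤ F a := by
      rcases Nat.eq_zero_or_pos a with h0 | h0
      · rw [h0, hF0]
      · have haN : a < N := lt_of_le_of_lt hai hiN
        rw [hF, if_neg (by omega)]
        have h1 : 0 ≤ ρn (a - 1) * max (u a) 0 :=
          mul_nonneg (haL (by omega)) (le_max_right _ _)
        have h2 : 0 ≤ ρn a * min (u a) 0 :=
          mul_nonneg_of_nonpos_of_nonpos (haneg a le_rfl hai).le (min_le_right _ _)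
        linarith
    have hFb : F (b + 1) ≤ 0 := by
      rcases Nat.lt_or_ge (b + 1) N with h1 | h1
      · rw [hF, if_neg (by omega)]
        simp only [Nat.add_sub_cancel]
        have h2 : ρn b * max (u (b + 1)) 0 ≤ 0 :=
          mul_nonpos_of_nonpos_of_nonneg (hbneg b hib' le_rfl).le (le_max_right _ _)
        have h3 : ρn (b + 1) * min (u (b + 1)) 0 ≤ 0 :=
          mul_nonpos_of_nonneg_of_nonpos (hbR h1) (min_le_right _ _)
        linarith
      · rw [hFN _ h1]
    -- sum over the negative block
    have hsum : ∑ j ∈ Finset.Icc a b, ρn j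
        = ∑ j ∈ Finset.Icc a b, ρo j - c * (F (b + 1) - F a) := by
      have h1 : ∑ j ∈ Finset.Icc a b, ρn j
          = ∑ j ∈ Finset.Icc a b, (ρo j - c * (F (j + 1) - F j)) := by
        refine Finset.sum_congr rfl fun j hj => ?_
        rw [Finset.mem_Icc] at hj
        exact hstep j (lt_of_le_of_lt hj.2 hbN)
      rw [h1, Finset.sum_sub_distrib, ← Finset.mul_sum]
      congr 1
      rw [← Finset.Ico_add_one_right_eq_Icc, tele a (b + 1) (by omega)]
    have hlhs : ∑ j ∈ Finset.Icc a b, ρn j < 0 :=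
      Finset.sum_neg hallneg ⟨a, Finset.mem_Icc.mpr ⟨le_rfl, hab⟩⟩
    have hrhs : 0 ≤ ∑ j ∈ Finset.Icc a b, ρo j - c * (F (b + 1) - F a) := by
      have h1 : 0 ≤ ∑ j ∈ Finset.Icc a b, ρo j :=
        Finset.sum_nonneg fun j hj => hpos j
          (lt_of_le_of_lt (Finset.mem_Icc.mp hj).2 hbN)
      have h2 : c * (F (b + 1) - F a) ≤ 0 :=
        mul_nonpos_of_nonneg_of_nonpos hc (by linarith)
      linarith
    rw [hsum] at hlhs
    linarith
  · -- mass
    have h1 : ∑ i ∈ Finset.range N, ρn i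
        = ∑ i ∈ Finset.range N, (ρo i - c * (F (i + 1) - F i)) :=
      Finset.sum_congr rfl fun i hi => hstep i (Finset.mem_range.mp hi)
    rw [h1, Finset.sum_sub_distrib, ← Finset.mul_sum, Finset.sum_range_sub,
      hFN N le_rfl, hF0]
    ring

/-- Unconditional conservation of mass and non-negativity for the
fully discrete implicit finite-volume scheme
`(ρ_i^{n+1} − ρ_i^n)/Δt + (F_{i+1/2}^{n+1} − F_{i−1/2}^{n+1})/Δx = 0`
with no-flux boundary conditions: if `ρ_i^0 ≥ 0` for all `i`, then `ρ_i^n ≥ 0`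
for all `i, n`, and the discrete mass `Δx Σ_i ρ_i^n` is constant in `n`. -/
theorem fullydiscrete_mass_nonneg
    (N : ℕ) (hN : 2 ≤ N) (Δx Δt : ℝ) (hΔx : 0 < Δx) (hΔt : 0 < Δt)
    (H H' : ℝ → ℝ) (hHconv : ConvexOn ℝ (Ici 0) H)
    (hH' : ∀ s ∈ Ici (0 : ℝ), HasDerivWithinAt H (H' s) (Ici 0) s)
    (hH'cont : ContinuousOn H' (Ici 0))
    (V : ℕ → ℝ) (W : ℤ → ℝ) (hWsymm : ∀ j : ℤ, W (-j) = W j)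
    (ρ : ℕ → ℕ → ℝ)
    (hscheme : ∀ n : ℕ, ∀ i < N,
      (ρ (n + 1) i - ρ n i) / Δt
        + (fluxFD N Δx H' V W (ρ n) (ρ (n + 1)) (i + 1)
            - fluxFD N Δx H' V W (ρ n) (ρ (n + 1)) i) / Δx = 0)
    (h0 : ∀ i < N, 0 ≤ ρ 0 i) :
    ∀ n : ℕ,
      (∀ i < N, 0 ≤ ρ n i) ∧
      Δx * ∑ i ∈ Finset.range N, ρ n i = Δx * ∑ i ∈ Finset.range N, ρ 0 i := by
  intro n
  induction n with
  | zero => exact ⟨h0, rfl⟩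
  | succ n ih =>
    obtain ⟨hpos, hmass⟩ := ih
    have hstep : ∀ i < N, ρ (n + 1) i = ρ n i
        - (Δt / Δx) * (fluxFD N Δx H' V W (ρ n) (ρ (n + 1)) (i + 1)
            - fluxFD N Δx H' V W (ρ n) (ρ (n + 1)) i) := by
      intro i hi
      have h := hscheme n i hi
      field_simp at h ⊢
      linarith
    have hkey := key_step N (Δt / Δx) (by positivity) (ρ n) (ρ (n + 1))
      (velFD N Δx H' V W (ρ n) (ρ (n + 1)))
      (fluxFD N Δx H' V W (ρ n) (ρ (n + 1))) (fun e => rfl) hstep hpos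
    refine ⟨hkey.1, ?_⟩
    rw [hkey.2, hmass]
end
end
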